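/- arXiv:2406.07026 — 3 statements merged into one kernel-verified Lean document; each statement's English description precedes it below -/
import Mathlib

section
/- Suppose majority dynamics on a graph G has reached its limit cycle (x^t = x^{t+2} for all large t), and let i be a vertex of even degree d that oscillates (x_i^t ≠ x_i^{t+1}) and has exactly one oscillating neighbor. Then a contradiction follows; i.e., no oscillating vertex of even degree can have exactly one oscillating neighbor in the limit cycle. -/
open Finset
open scoped Classical

/-- One step of majority dynamics: a vertex takes the sign of the sum of its
neighbors' values, keeping its value on a tie. -/
def mdStep {V : Type*} [Fintype V] [DecidableEq V] (G : SimpleGraph V) [DecidableRel G.Adj]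
    (x : V → ℤ) : V → ℤ :=
  fun i =>
    if (∑ j ∈ G.neighborFinset i, x j) < 0 then -1
    else if 0 < ∑ j ∈ G.neighborFinset i, x j then 1
    else x i

/-- In the limit cycle of majority dynamics, an oscillating vertex of even degree
cannot have exactly one oscillating neighbor. -/
theorem stmt_6 {V : Type*} [Fintype V] [DecidableEq V] (G : SimpleGraph V) [DecidableRel G.Adj]
    (x0 : V → ℤ) (hx : ∀ i, x0 i = 1 ∨ x0 i = -1) (T : ℕ)
    (hlim : ∀ t, T ≤ t → (mdStep G)^[t + 2] x0 = (mdStep G)^[t] x0)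
    (i : V) (hdeg : Even (G.degree i))
    (hosc : ∀ t, T ≤ t → (mdStep G)^[t] x0 i ≠ (mdStep G)^[t + 1] x0 i)
    (hone : ((G.neighborFinset i).filter
        (fun j => ∀ t, T ≤ t → (mdStep G)^[t] x0 j ≠ (mdStep G)^[t + 1] x0 j)).card = 1) :
    False := by
  set y : ℕ → V → ℤ := fun t => (mdStep G)^[t] x0 with hy
  have hstep : ∀ t, y (t + 1) = mdStep G (y t) := by
    intro t
    simp only [hy, Function.iterate_succ_apply']
  -- values are ±1
  have hpm : ∀ t j, y t j = 1 ∨ y t j = -1 := by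
    intro t
    induction t with
    | zero => exact hx
    | succ n ih =>
      intro j
      rw [hstep n]
      unfold mdStep
      split
      · right; rfl
      · split
        · left; rfl
        · exact ih j
  -- periodicity
  have hperk : ∀ t, T ≤ t → ∀ k, y (t + 2 * k) = y t := by
    intro t ht k
    induction k with
    | zero => rfl
    | succ n ih =>
      have h2 : t + 2 * (n + 1) = (t + 2 * n) + 2 := by ring
      rw [h2]
      have := hlim (t + 2 * n) (by omega)
      simp only [hy] at ih ⊢
      rw [this, ih]
  have hpar : ∀ s t, T ≤ s → T ≤ t → s % 2 = t % 2 → y s = y t := by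
    have key : ∀ s t, T ≤ s → s ≤ t → s % 2 = t % 2 → y t = y s := by
      intro s t hs hst hp
      obtain ⟨k, hk⟩ : ∃ k, t = s + 2 * k := ⟨(t - s) / 2, by omega⟩
      rw [hk, hperk s hs]
    intro s t hs ht hp
    rcases le_total s t with h | h
    · exact (key s t hs h hp).symm
    · exact key t s ht h hp.symm
  -- non-oscillating vertices are eventually constant
  have hfix : ∀ j, (¬ ∀ t, T ≤ t → y t j ≠ y (t + 1) j) → ∀ t, T ≤ t → y (t + 1) j = y t j := by
    intro j hj t ht
    push_neg at hj
    obtain ⟨t0, ht0, heq⟩ := hj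
    by_cases hp : t % 2 = t0 % 2
    · have h1 := congrFun (hpar t t0 ht ht0 hp) j
      have h2 := congrFun (hpar (t + 1) (t0 + 1) (by omega) (by omega) (by omega)) j
      rw [h2, h1, heq]
    · have h1 := congrFun (hpar t (t0 + 1) ht (by omega) (by omega)) j
      have h2 := congrFun (hpar (t + 1) t0 (by omega) ht0 (by omega)) j
      rw [h2, h1, heq]
  -- the unique oscillating neighbor
  rw [Finset.card_eq_one] at hone
  obtain ⟨j0, hj0⟩ := hone
  have hj0mem : j0 ∈ (G.neighborFinset i).filter
      (fun j => ∀ t, T ≤ t → y t j ≠ y (t + 1) j) := by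
    rw [hj0]; exact Finset.mem_singleton_self j0
  rw [Finset.mem_filter] at hj0mem
  obtain ⟨hj0adj, hj0osc⟩ := hj0mem
  -- sums
  set S : ℕ → ℤ := fun t => ∑ j ∈ G.neighborFinset i, y t j with hS
  -- sign facts
  have hsign : ∀ t, T ≤ t → (S t < 0 ∧ y (t + 1) i = -1) ∨ (0 < S t ∧ y (t + 1) i = 1) := by
    intro t ht
    have h1 : y (t + 1) i = mdStep G (y t) i := by rw [hstep t]
    have hne := hosc t ht
    unfold mdStep at h1
    split at h1
    · left; exact ⟨by assumption, h1⟩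
    · split at h1
      · right; exact ⟨by assumption, h1⟩
      · exact absurd h1.symm hne
  -- difference of consecutive sums equals change of j0 only
  have hdiff : S (T + 1) - S T = y (T + 1) j0 - y T j0 := by
    have : S (T + 1) - S T = ∑ j ∈ G.neighborFinset i, (y (T + 1) j - y T j) := by
      rw [hS]; rw [Finset.sum_sub_distrib]
    rw [this]
    apply Finset.sum_eq_single_of_mem j0 hj0adj
    intro j hj hjne
    have hjnot : ¬ ∀ t, T ≤ t → y t j ≠ y (t + 1) j := by
      intro hjall
      have : j ∈ (G.neighborFinset i).filter
          (fun j => ∀ t, T ≤ t → y t j ≠ y (t + 1) j) :=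
        Finset.mem_filter.mpr ⟨hj, hjall⟩
      rw [hj0, Finset.mem_singleton] at this
      exact hjne this
    have := hfix j hjnot T le_rfl
    omega
  -- j0 flips
  have hj0flip : y (T + 1) j0 - y T j0 = 2 ∨ y (T + 1) j0 - y T j0 = -2 := by
    have h1 := hpm T j0
    have h2 := hpm (T + 1) j0
    have h3 := hj0osc T le_rfl
    rcases h1 with h1 | h1 <;> rcases h2 with h2 | h2 <;> rw [h1, h2] <;> omega
  -- S T is even
  have hEvenS : S T % 2 = 0 := by
    have h1 : Even (∑ j ∈ G.neighborFinset i, (y T j + 1)) := by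
      apply Finset.even_sum
      intro j hj
      rcases hpm T j with h | h <;> rw [h] <;> decide
    rw [Finset.sum_add_distrib, Finset.sum_const, nsmul_eq_mul, mul_one] at h1
    have hcard : (G.neighborFinset i).card = G.degree i := rfl
    rw [hcard] at h1
    have hd : Even ((G.degree i : ℤ)) := Int.even_coe_nat _ |>.mpr hdeg
    have h2 : Even (S T) := by
      have := h1.sub hd
      simpa using this
    exact Int.even_iff.mp h2
  -- period 2 at i
  have hperi : y (T + 2) i = y T i := by
    have := hperk T le_rfl 1
    have h := congrFun this i
    simpa using h
  -- conclude
  have hs0 := hsign T le_rfl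
  have hs1 := hsign (T + 1) (by omega)
  have hT2 : T + 1 + 1 = T + 2 := rfl
  rw [hT2, hperi] at hs1
  have hoscT : y T i ≠ y (T + 1) i := hosc T le_rfl
  rcases hs0 with ⟨hlt, he⟩ | ⟨hgt, he⟩ <;> rcases hs1 with ⟨hlt1, he1⟩ | ⟨hgt1, he1⟩ <;>
    omega
end

section
/- If G is a d-regular graph with d even, then in the limit cycle of majority dynamics, the subgraph induced by the set of oscillating vertices has no vertex of degree exactly 1 (no leaves). -/
open Finset
open scoped Classical

/-- In a `d`-regular graph with `d` even, the subgraph induced by the oscillating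
vertices (in the limit cycle of majority dynamics) has no leaves. -/
theorem stmt_7 {V : Type*} [Fintype V] [DecidableEq V] (G : SimpleGraph V) [DecidableRel G.Adj]
    (d : ℕ) (hreg : ∀ v, G.degree v = d) (heven : Even d)
    (x0 : V → ℤ) (hx : ∀ i, x0 i = 1 ∨ x0 i = -1) (T : ℕ)
    (hlim : ∀ t, T ≤ t → (mdStep G)^[t + 2] x0 = (mdStep G)^[t] x0)
    (i : V) (hosc : ∀ t, T ≤ t → (mdStep G)^[t] x0 i ≠ (mdStep G)^[t + 1] x0 i) :
    ((G.neighborFinset i).filter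
        (fun j => ∀ t, T ≤ t → (mdStep G)^[t] x0 j ≠ (mdStep G)^[t + 1] x0 j)).card ≠ 1 := by
  intro hcard
  set y : ℕ → V → ℤ := fun t => (mdStep G)^[t] x0 with hy
  have hsucc : ∀ t, y (t + 1) = mdStep G (y t) := by
    intro t; simp [hy, Function.iterate_succ_apply']
  -- all values are ±1
  have hpm : ∀ t v, y t v = 1 ∨ y t v = -1 := by
    intro t
    induction t with
    | zero => exact hx
    | succ t ih =>
      intro v
      rw [hsucc t]
      unfold mdStep
      split_ifs with h1 h2
      · right; rfl
      · left; rfl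
      · exact ih v
  -- characterization of a flip
  have hstep : ∀ t, y t i ≠ y (t + 1) i →
      ((∑ k ∈ G.neighborFinset i, y t k) < 0 ∧ y (t + 1) i = -1) ∨
      (0 < (∑ k ∈ G.neighborFinset i, y t k) ∧ y (t + 1) i = 1) := by
    intro t hne
    rw [hsucc t] at hne ⊢
    unfold mdStep at hne ⊢
    split_ifs at hne ⊢ with h1 h2
    · exact Or.inl ⟨h1, rfl⟩
    · exact Or.inr ⟨h2, rfl⟩
    · exact absurd rfl hne
  -- the neighbor sum is always even
  have heS : ∀ t, Even (∑ k ∈ G.neighborFinset i, y t k) := by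
    intro t
    have h1 : Even (∑ k ∈ G.neighborFinset i, (y t k + 1)) := by
      apply Finset.even_sum
      intro k _
      rcases hpm t k with h | h <;> rw [h] <;> decide
    have h2 : (∑ k ∈ G.neighborFinset i, (y t k + 1)) =
        (∑ k ∈ G.neighborFinset i, y t k) + d := by
      rw [Finset.sum_add_distrib]
      simp [G.card_neighborFinset_eq_degree, hreg i]
    rw [h2] at h1
    obtain ⟨m, hm⟩ := heven
    obtain ⟨n, hn⟩ := h1
    exact ⟨n - m, by omega⟩
  -- periodicity at i
  have hper : ∀ t, T ≤ t → y (t + 2) i = y t i := fun t ht => congrFun (hlim t ht) i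
  -- get the unique oscillating neighbor j
  obtain ⟨j, hj⟩ := Finset.card_eq_one.mp hcard
  have hjmem : j ∈ (G.neighborFinset i).filter
      (fun j => ∀ t, T ≤ t → (mdStep G)^[t] x0 j ≠ (mdStep G)^[t + 1] x0 j) := by
    rw [hj]; exact Finset.mem_singleton_self j
  rw [Finset.mem_filter] at hjmem
  obtain ⟨hjN, hjosc⟩ := hjmem
  -- every other neighbor is eventually constant
  have hconst : ∀ k ∈ (G.neighborFinset i).erase j,
      ∃ t0, T ≤ t0 ∧ ∀ s, t0 ≤ s → y s k = y (s + 1) k := by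
    intro k hk
    have hkN : k ∈ G.neighborFinset i := Finset.mem_of_mem_erase hk
    have hknj : k ≠ j := Finset.ne_of_mem_erase hk
    have hkno : ¬ (∀ t, T ≤ t → (mdStep G)^[t] x0 k ≠ (mdStep G)^[t + 1] x0 k) := by
      intro h
      have : k ∈ (G.neighborFinset i).filter
          (fun j => ∀ t, T ≤ t → (mdStep G)^[t] x0 j ≠ (mdStep G)^[t + 1] x0 j) :=
        Finset.mem_filter.mpr ⟨hkN, h⟩
      rw [hj, Finset.mem_singleton] at this
      exact hknj this
    push_neg at hkno
    obtain ⟨t0, ht0, heq⟩ := hkno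
    refine ⟨t0, ht0, ?_⟩
    intro s hs
    induction s, hs using Nat.le_induction with
    | base => exact heq
    | succ s hs ih =>
      have h2 : y (s + 2) k = y s k := congrFun (hlim s (le_trans ht0 hs)) k
      rw [show s + 1 + 1 = s + 2 from rfl, h2, ih]
  -- a uniform time after which all non-j neighbors are constant
  have huni : ∃ t1, T ≤ t1 ∧ ∀ k ∈ (G.neighborFinset i).erase j,
      ∀ s, t1 ≤ s → y s k = y (s + 1) k := by
    have key : ∀ (F : Finset V), (∀ k ∈ F, ∃ t0, T ≤ t0 ∧ ∀ s, t0 ≤ s → y s k = y (s + 1) k) →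
        ∃ t1, T ≤ t1 ∧ ∀ k ∈ F, ∀ s, t1 ≤ s → y s k = y (s + 1) k := by
      intro F
      induction F using Finset.induction_on with
      | empty => intro _; exact ⟨T, le_refl T, by simp⟩
      | @insert a F hnot ih =>
        intro h
        obtain ⟨t1, ht1, hF⟩ := ih (fun k hk => h k (Finset.mem_insert_of_mem hk))
        obtain ⟨t0, ht0, hk0⟩ := h a (Finset.mem_insert_self a F)
        refine ⟨max t0 t1, le_trans ht1 (le_max_right _ _), ?_⟩
        intro k hk s hs
        rcases Finset.mem_insert.mp hk with rfl | hk
        · exact hk0 s (le_trans (le_max_left _ _) hs)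
        · exact hF k hk s (le_trans (le_max_right _ _) hs)
    exact key _ hconst
  obtain ⟨t1, ht1, hC⟩ := huni
  -- decompose the sums at t1 and t1+1
  have hd1 : y t1 j + ∑ k ∈ (G.neighborFinset i).erase j, y t1 k =
      ∑ k ∈ G.neighborFinset i, y t1 k := Finset.add_sum_erase _ _ hjN
  have hd2 : y (t1 + 1) j + ∑ k ∈ (G.neighborFinset i).erase j, y (t1 + 1) k =
      ∑ k ∈ G.neighborFinset i, y (t1 + 1) k := Finset.add_sum_erase _ _ hjN
  have hCeq : ∑ k ∈ (G.neighborFinset i).erase j, y t1 k =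
      ∑ k ∈ (G.neighborFinset i).erase j, y (t1 + 1) k :=
    Finset.sum_congr rfl (fun k hk => hC k hk t1 le_rfl)
  -- j flips between t1 and t1+1
  have hjflip : y t1 j ≠ y (t1 + 1) j := hjosc t1 ht1
  -- i flips at t1 and t1+1
  have hi1 := hstep t1 (hosc t1 ht1)
  have hi2 := hstep (t1 + 1) (hosc (t1 + 1) (by omega))
  have hper1 : y (t1 + 1 + 1) i = y t1 i := hper t1 ht1
  have hine : y t1 i ≠ y (t1 + 1) i := hosc t1 ht1
  obtain ⟨a, ha⟩ := heS t1
  obtain ⟨b, hb⟩ := heS (t1 + 1)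
  rcases hpm t1 j with hp | hp <;> rcases hpm (t1 + 1) j with hq | hq <;>
    rcases hpm t1 i with hu | hu <;> rcases hpm (t1 + 1) i with hv | hv <;>
    rcases hi1 with ⟨hs1, hv1⟩ | ⟨hs1, hv1⟩ <;> rcases hi2 with ⟨hs2, hv2⟩ | ⟨hs2, hv2⟩ <;>
    omega
end

section
/- Let G be a d-regular graph. If S and T are disjoint nonempty sets of vertices such that every vertex of S has at least d/2 neighbors in S and every vertex of T has at least d/2 neighbors in T (i.e., S and T are disjoint cores), then G admits an internal cut. -/
/-! Among all vertex sets `A` with `S ⊆ A` and `A ∩ T = ∅`, take one cutting the fewest edges.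
Moving a vertex `v ∉ S ∪ T` to the other side changes the cut by (neighbours on its own side) −
(neighbours on the other side), so minimality makes `v` satisfied; a vertex of the core `S`
(resp. `T`) is satisfied because at least half of its neighbours lie in `S ⊆ A` (resp. `T ⊆ Aᶜ`). -/

open Finset
open scoped Classical

namespace SimpleGraph

variable {V : Type*} (G : SimpleGraph V) [DecidableRel G.Adj]

theorem card_interedges_comm (s t : Finset V) :
    #(G.interedges s t) = #(G.interedges t s) :=
  have := G.symm
  Rel.card_interedges_comm s t

variable [DecidableEq V]

theorem card_interedges_union_left {s₁ s₂ : Finset V} (h : Disjoint s₁ s₂) (t : Finset V) :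
    #(G.interedges (s₁ ∪ s₂) t) = #(G.interedges s₁ t) + #(G.interedges s₂ t) := by
  rw [← card_union_of_disjoint (G.interedges_disjoint_left h t)]
  congr 1
  ext ⟨a, b⟩
  simp only [mk_mem_interedges_iff, mem_union, or_and_right]

theorem card_interedges_union_right (s : Finset V) {t₁ t₂ : Finset V} (h : Disjoint t₁ t₂) :
    #(G.interedges s (t₁ ∪ t₂)) = #(G.interedges s t₁) + #(G.interedges s t₂) := by
  simp only [G.card_interedges_comm s, G.card_interedges_union_left h]

variable [Fintype V]

theorem card_interedges_singleton_left (v : V) (t : Finset V) :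
    #(G.interedges {v} t) = #{w ∈ G.neighborFinset v | w ∈ t} := by
  have : G.interedges {v} t = {v} ×ˢ {w ∈ G.neighborFinset v | w ∈ t} := by
    ext ⟨a, b⟩
    simp only [mk_mem_interedges_iff, mem_product, mem_singleton, mem_filter,
      mem_neighborFinset, and_comm]
    constructor <;> rintro ⟨rfl, h⟩ <;> exact ⟨rfl, h⟩
  rw [this, card_product, card_singleton, one_mul]

def cutSize (A : Finset V) : ℕ := #(G.interedges A Aᶜ)

theorem cutSize_compl (A : Finset V) : G.cutSize Aᶜ = G.cutSize A := by
  rw [cutSize, cutSize, compl_compl, card_interedges_comm]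

theorem cutSize_add_card_neighbor_mem {A : Finset V} {v : V} (hv : v ∈ A) :
    G.cutSize A + #{w ∈ G.neighborFinset v | w ∈ A} =
      G.cutSize (A.erase v) + #{w ∈ G.neighborFinset v | w ∉ A} := by
  -- With `A = {v} ∪ A'` and `A'ᶜ = {v} ∪ Aᶜ`, both cuts contain the edges between `A'` and `Aᶜ`.
  set A' := A.erase v
  have hvA' : v ∉ A' := notMem_erase v A
  have hA : A = {v} ∪ A' := by rw [← insert_eq, insert_erase hv]
  have hA'c : A'ᶜ = {v} ∪ Aᶜ := by
    ext w; by_cases hw : w = v <;> simp [A', hw, hv]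
  have hin : #{w ∈ G.neighborFinset v | w ∈ A} = #(G.interedges A' {v}) := by
    rw [card_interedges_comm, card_interedges_singleton_left]
    congr 1
    refine filter_congr fun w hw => ?_
    rw [mem_erase, and_iff_right (G.ne_of_adj ((G.mem_neighborFinset v w).1 hw)).symm]
  have hout : #{w ∈ G.neighborFinset v | w ∉ A} = #(G.interedges {v} Aᶜ) := by
    simp only [card_interedges_singleton_left, mem_compl]
  have hcutA : G.cutSize A = #(G.interedges {v} Aᶜ) + #(G.interedges A' Aᶜ) := by
    rw [cutSize, ← card_interedges_union_left _ (disjoint_singleton_left.2 hvA'), ← hA]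
  have hcutA' : G.cutSize A' = #(G.interedges A' {v}) + #(G.interedges A' Aᶜ) := by
    rw [cutSize, hA'c, card_interedges_union_right _ _ (disjoint_singleton_left.2 (by simpa))]
  omega

def Satisfied (A : Finset V) (v : V) : Prop :=
  #{w ∈ G.neighborFinset v | w ∉ A} ≤ #{w ∈ G.neighborFinset v | w ∈ A}

theorem satisfied_of_cutSize_le_erase {A : Finset V} {v : V} (hv : v ∈ A)
    (h : G.cutSize A ≤ G.cutSize (A.erase v)) : G.Satisfied A v := by
  have := G.cutSize_add_card_neighbor_mem hv
  unfold Satisfied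
  omega

theorem satisfied_of_core {S A : Finset V} {v : V} (hSA : S ⊆ A)
    (hcore : G.degree v ≤ 2 * #{w ∈ G.neighborFinset v | w ∈ S}) : G.Satisfied A v := by
  have hsplit := card_filter_add_card_filter_not (s := G.neighborFinset v) (· ∈ A)
  have hmono : #{w ∈ G.neighborFinset v | w ∈ S} ≤ #{w ∈ G.neighborFinset v | w ∈ A} :=
    card_le_card (monotone_filter_right _ fun _ _ hw => hSA hw)
  rw [card_neighborFinset_eq_degree] at hsplit
  unfold Satisfied
  omega

theorem satisfied_of_forall_cutSize_le {S T A : Finset V}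
    (hScore : ∀ v ∈ S, G.degree v ≤ 2 * #{w ∈ G.neighborFinset v | w ∈ S})
    (hSA : S ⊆ A) (hAT : Disjoint A T)
    (hmin : ∀ B, S ⊆ B → Disjoint B T → G.cutSize A ≤ G.cutSize B) :
    ∀ v ∈ A, G.Satisfied A v := by
  intro v hv
  by_cases hvS : v ∈ S
  · exact G.satisfied_of_core hSA (hScore v hvS)
  · refine G.satisfied_of_cutSize_le_erase hv (hmin _ (fun s hs => ?_) ?_)
    · exact mem_erase.2 ⟨fun h => hvS (h ▸ hs), hSA hs⟩
    · exact hAT.mono_left (erase_subset v A)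

end SimpleGraph

/-- If a `d`-regular graph has two disjoint nonempty cores `S` and `T`, then it
admits an internal cut. -/
theorem stmt_9 {V : Type*} [Fintype V] [DecidableEq V] (G : SimpleGraph V) [DecidableRel G.Adj]
    (d : ℕ) (hreg : ∀ v, G.degree v = d)
    (S T : Finset V) (hdisj : Disjoint S T) (hS : S.Nonempty) (hT : T.Nonempty)
    (hScore : ∀ v ∈ S, d ≤ 2 * ((G.neighborFinset v).filter (· ∈ S)).card)
    (hTcore : ∀ v ∈ T, d ≤ 2 * ((G.neighborFinset v).filter (· ∈ T)).card) :
    ∃ A : Finset V, A.Nonempty ∧ Aᶜ.Nonempty ∧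
      (∀ v ∈ A, ((G.neighborFinset v).filter (· ∉ A)).card ≤
        ((G.neighborFinset v).filter (· ∈ A)).card) ∧
      (∀ v ∉ A, ((G.neighborFinset v).filter (· ∈ A)).card ≤
        ((G.neighborFinset v).filter (· ∉ A)).card) := by
  obtain ⟨A, hA, hmin⟩ := exists_min_image {A : Finset V | S ⊆ A ∧ Disjoint A T} G.cutSize
    ⟨S, by simpa using hdisj⟩
  obtain ⟨hSA, hAT⟩ := (mem_filter.1 hA).2
  have hminA : ∀ B, S ⊆ B → Disjoint B T → G.cutSize A ≤ G.cutSize B :=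
    fun B hSB hBT => hmin B (by simp [hSB, hBT])
  have hminAc : ∀ B, T ⊆ B → Disjoint B S → G.cutSize Aᶜ ≤ G.cutSize B := by
    intro B hTB hBS
    rw [G.cutSize_compl, ← G.cutSize_compl B]
    exact hminA _ (subset_compl_iff_disjoint_left.2 hBS) (disjoint_compl_left_iff.2 hTB)
  have hTAc : T ⊆ Aᶜ := subset_compl_iff_disjoint_left.2 hAT
  refine ⟨A, hS.mono hSA, hT.mono hTAc, ?_, fun v hv => ?_⟩
  · exact G.satisfied_of_forall_cutSize_le (fun v hv => (hreg v).trans_le (hScore v hv))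
      hSA hAT hminA
  · simpa [SimpleGraph.Satisfied] using G.satisfied_of_forall_cutSize_le
      (fun v hv => (hreg v).trans_le (hTcore v hv)) hTAc (disjoint_compl_left_iff.2 hSA) hminAc
      v (mem_compl.2 hv)
end
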